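/- In a multichannel random access game with N users and K channels where N > K, fix any assignment n ↦ k_n of users to channels such that every channel in {1,...,K} is assigned to at least one user. Then the strategy profile in which each user n transmits with probability 1 on channel k_n at every time slot is a subgame perfect equilibrium: every user assigned to a channel shared by at least two users receives total reward 0 and cannot improve by any unilateral deviation, and every user assigned to a channel it occupies alone receives the maximal possible reward Σ_{t=1}^T γ^{t-1}. -/
import Mathlib


/-- `success K a n = 1` if user `n` transmits (action `≠ 0`) and is the unique
transmitter on its chosen channel under the joint action `a`; `0` otherwise. -/
noncomputable def success (K N : ℕ) (a : Fin N → Fin (K + 1)) (n : Fin N) : ℝ :=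
  if a n ≠ 0 ∧ ∀ m : Fin N, m ≠ n → a m ≠ a n then 1 else 0

/-- Discounted continuation reward of user `n` from slot `t0` on. -/
noncomputable def contReward (K N T : ℕ) (γ : ℝ) (σ : Fin T → Fin N → Fin (K + 1))
    (n : Fin N) (t0 : ℕ) : ℝ :=
  ∑ t ∈ Finset.univ.filter (fun t : Fin T => t0 ≤ (t : ℕ)),
    γ ^ (t : ℕ) * success K N (σ t) n

lemma success_nonneg (K N : ℕ) (a : Fin N → Fin (K + 1)) (n : Fin N) :
    0 ≤ success K N a n := by
  unfold success; split <;> norm_num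

lemma success_dev_le (K N : ℕ) (kn : Fin N → Fin (K + 1))
    (hsurj : ∀ k : Fin (K + 1), k ≠ 0 → ∃ n, kn n = k)
    (n : Fin N) (dev : Fin (K + 1)) :
    success K N (fun m => if m = n then dev else kn m) n ≤
      success K N (fun m => kn m) n := by
  by_cases hd : dev = 0
  · have : success K N (fun m => if m = n then dev else kn m) n = 0 := by
      unfold success
      rw [if_neg]
      simp [hd]
    rw [this]; exact success_nonneg _ _ _ _
  · obtain ⟨m, hm⟩ := hsurj dev hd
    by_cases hmn : m = n
    · have hfun : (fun m' => if m' = n then dev else kn m') = kn := by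
        funext m'
        by_cases h : m' = n
        · simp [h, ← hmn, hm]
        · simp [h]
      rw [hfun]
    · have : success K N (fun m' => if m' = n then dev else kn m') n = 0 := by
        unfold success
        rw [if_neg]
        intro ⟨_, h2⟩
        exact h2 m hmn (by simp [hmn, hm])
      rw [this]; exact success_nonneg _ _ _ _

/-- with `N > K` users and a surjective channel assignment `kn`
(every channel assigned to at least one user, all assignments being actual
channels), the always-transmit profile is a subgame perfect equilibrium:
users on shared channels get total reward 0 and cannot improve by any
unilateral deviation from any time on, and users alone on their channel get
the maximal reward `∑ γ^{t}`. -/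
theorem competitive_SPE_N_gt_K (N K T : ℕ) (γ : ℝ) (hγ0 : 0 ≤ γ) (hγ1 : γ ≤ 1)
    (hNK : N > K) (kn : Fin N → Fin (K + 1)) (htx : ∀ n, kn n ≠ 0)
    (hsurj : ∀ k : Fin (K + 1), k ≠ 0 → ∃ n, kn n = k) :
    -- SPE: no unilateral deviation from any slot `t0` on helps any user
    (∀ (n : Fin N) (dev : Fin T → Fin (K + 1)) (t0 : ℕ),
      contReward K N T γ (fun t m => if m = n then dev t else kn m) n t0 ≤
        contReward K N T γ (fun _ m => kn m) n t0) ∧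
    -- users sharing a channel receive total reward 0
    (∀ n : Fin N, (∃ m, m ≠ n ∧ kn m = kn n) →
      contReward K N T γ (fun _ m => kn m) n 0 = 0) ∧
    -- users alone on their channel receive the maximal reward ∑ γ^t
    (∀ n : Fin N, (∀ m, m ≠ n → kn m ≠ kn n) →
      contReward K N T γ (fun _ m => kn m) n 0 = ∑ t ∈ Finset.range T, γ ^ t) := by
  refine ⟨?_, ?_, ?_⟩
  · intro n dev t0
    unfold contReward
    apply Finset.sum_le_sum
    intro t _
    exact mul_le_mul_of_nonneg_left (success_dev_le K N kn hsurj n (dev t))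
      (pow_nonneg hγ0 _)
  · intro n ⟨m, hmn, hm⟩
    unfold contReward
    apply Finset.sum_eq_zero
    intro t _
    have : success K N (fun m => kn m) n = 0 := by
      unfold success
      rw [if_neg]
      intro ⟨_, h2⟩
      exact h2 m hmn hm
    rw [this, mul_zero]
  · intro n halone
    unfold contReward
    have : success K N (fun m => kn m) n = 1 := by
      unfold success
      rw [if_pos ⟨htx n, halone⟩]
    simp only [this, mul_one]
    rw [Finset.filter_true_of_mem (by intro t _; exact Nat.zero_le _)]
    exact Fin.sum_univ_eq_sum_range (fun t => γ ^ t) T
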